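/- arXiv:2502.17600 — 5 statements merged into one kernel-verified Lean document; each statement's English description precedes it below -/
import Mathlib

section
/- If X is a set of points in ℝ^d contained in a rectangular box with side lengths r, 2r, 2r, ..., 2r, and every two distinct points of X are at distance at least r from each other, then |X| ≤ 2^(d-1) · (1 + ⌈√d⌉)^d. -/
lemma key_floor (B : ℕ) (t : ℝ) (ht0 : 0 ≤ t) (ht1 : t ≤ B + 1) :
    ((min ⌊t⌋₊ B : ℕ) : ℝ) ≤ t ∧ t ≤ ((min ⌊t⌋₊ B : ℕ) : ℝ) + 1 := by
  constructor
  · calc ((min ⌊t⌋₊ B : ℕ) : ℝ) ≤ (⌊t⌋₊ : ℝ) := by exact_mod_cast min_le_left _ _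
      _ ≤ t := Nat.floor_le ht0
  · rcases le_or_gt ⌊t⌋₊ B with h | h
    · rw [min_eq_left h]
      exact (Nat.lt_floor_add_one t).le
    · rw [min_eq_right h.le]
      exact ht1

theorem stmt_0 (d : ℕ) (hd : 1 ≤ d) (r : ℝ) (hr : 0 < r)
    (a : EuclideanSpace ℝ (Fin d)) (X : Set (EuclideanSpace ℝ (Fin d)))
    (hbox : ∀ x ∈ X, x ⟨0, hd⟩ ∈ Set.Icc (a ⟨0, hd⟩) (a ⟨0, hd⟩ + r) ∧
      ∀ i : Fin d, i ≠ ⟨0, hd⟩ → x i ∈ Set.Icc (a i) (a i + 2 * r))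
    (hsep : ∀ x ∈ X, ∀ y ∈ X, x ≠ y → r ≤ dist x y) :
    X.Finite ∧ Nat.card X ≤ 2 ^ (d - 1) * (1 + ⌈Real.sqrt d⌉₊) ^ d := by
  set z : Fin d := ⟨0, hd⟩ with hz
  set m : ℕ := 1 + ⌈Real.sqrt d⌉₊ with hm
  have hdr : (0:ℝ) < d := by exact_mod_cast hd
  have hsqrt_pos : (0:ℝ) < Real.sqrt d := Real.sqrt_pos.mpr hdr
  have hm2 : 2 ≤ m := by
    have h1 : 1 ≤ ⌈Real.sqrt d⌉₊ := Nat.one_le_ceil_iff.mpr hsqrt_pos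
    omega
  have hmpos : (0:ℝ) < m := by positivity
  have hsqrt_lt : Real.sqrt d < m := by
    calc Real.sqrt d ≤ (⌈Real.sqrt d⌉₊ : ℝ) := Nat.le_ceil _
      _ < m := by exact_mod_cast Nat.lt_succ_of_le (le_refl _) |>.trans_le (by omega)
  set bound : Fin d → ℕ := fun i => if i = z then m else 2 * m with hbound
  have hboundpos : ∀ i, 0 < bound i := by
    intro i; simp only [hbound]; split <;> omega
  -- the bounds t-values
  have hT : ∀ x ∈ X, ∀ i : Fin d,
      0 ≤ (x i - a i) * m / r ∧ (x i - a i) * m / r ≤ bound i := by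
    intro x hx i
    obtain ⟨h0, hrest⟩ := hbox x hx
    by_cases hiz : i = z
    · subst hiz
      obtain ⟨hl, hu⟩ := h0
      constructor
      · apply div_nonneg _ hr.le
        have : (0:ℝ) ≤ x z - a z := by linarith
        positivity
      · simp only [hbound, if_pos rfl]
        rw [div_le_iff₀ hr]
        have : x z - a z ≤ r := by linarith
        calc (x z - a z) * m ≤ r * m := by nlinarith
          _ = m * r := by ring
    · obtain ⟨hl, hu⟩ := hrest i hiz
      constructor
      · apply div_nonneg _ hr.le
        have : (0:ℝ) ≤ x i - a i := by linarith
        positivity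
      · simp only [hbound, if_neg hiz]
        rw [div_le_iff₀ hr]
        have : x i - a i ≤ 2 * r := by linarith
        push_cast
        calc (x i - a i) * m ≤ (2 * r) * m := by nlinarith
          _ = 2 * m * r := by ring
  set G : X → (∀ i, Fin (bound i)) := fun x i =>
    ⟨min ⌊(x.1 i - a i) * m / r⌋₊ (bound i - 1),
      lt_of_le_of_lt (min_le_right _ _) (Nat.sub_lt (hboundpos i) one_pos)⟩ with hG
  have hGinj : Function.Injective G := by
    intro x y hxy
    apply Subtype.ext
    by_contra hne
    have hdxy : r ≤ dist x.1 y.1 := hsep _ x.2 _ y.2 hne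
    have hcoord : ∀ i : Fin d, dist (x.1 i) (y.1 i) ≤ r / m := by
      intro i
      have hval : min ⌊(x.1 i - a i) * m / r⌋₊ (bound i - 1)
          = min ⌊(y.1 i - a i) * m / r⌋₊ (bound i - 1) := by
        have := congrFun hxy i
        simpa [hG] using congrArg Fin.val this
      have hB1 : ((bound i - 1 : ℕ) : ℝ) + 1 = bound i := by
        have := Nat.succ_pred_eq_of_pos (hboundpos i)
        exact_mod_cast this
      obtain ⟨hx0, hx1⟩ := hT x.1 x.2 i
      obtain ⟨hy0, hy1⟩ := hT y.1 y.2 i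
      have kx := key_floor (bound i - 1) _ hx0 (by rw [hB1]; exact hx1)
      have ky := key_floor (bound i - 1) _ hy0 (by rw [hB1]; exact hy1)
      rw [hval] at kx
      have habs : |(x.1 i - a i) * m / r - (y.1 i - a i) * m / r| ≤ 1 := by
        rw [abs_le]; constructor <;> [linarith [kx.1, kx.2, ky.1, ky.2]; linarith [kx.1, kx.2, ky.1, ky.2]]
      have heq : (x.1 i - a i) * m / r - (y.1 i - a i) * m / r
          = (x.1 i - y.1 i) * (m / r) := by ring
      rw [heq, abs_mul, abs_of_pos (by positivity : (0:ℝ) < (m:ℝ)/r)] at habs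
      rw [Real.dist_eq, le_div_iff₀ hmpos]
      calc |x.1 i - y.1 i| * m = |x.1 i - y.1 i| * (m / r) * r := by field_simp
        _ ≤ 1 * r := mul_le_mul_of_nonneg_right habs hr.le
        _ = r := one_mul r
    have hlt : dist x.1 y.1 < r := by
      rw [EuclideanSpace.dist_eq]
      have hsum : ∑ i, dist (x.1 i) (y.1 i) ^ 2 ≤ d * (r / m) ^ 2 := by
        calc ∑ i, dist (x.1 i) (y.1 i) ^ 2 ≤ ∑ _i : Fin d, (r / m) ^ 2 := by
              apply Finset.sum_le_sum
              intro i _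
              have h1 := hcoord i
              have h0 : (0:ℝ) ≤ dist (x.1 i) (y.1 i) := dist_nonneg
              nlinarith
          _ = d * (r / m) ^ 2 := by simp [Finset.sum_const, Finset.card_univ]
      calc Real.sqrt (∑ i, dist (x.1 i) (y.1 i) ^ 2)
          ≤ Real.sqrt (d * (r / m) ^ 2) := Real.sqrt_le_sqrt hsum
        _ = Real.sqrt d * (r / m) := by
            rw [Real.sqrt_mul hdr.le, Real.sqrt_sq (by positivity)]
        _ < m * (r / m) := by
            apply mul_lt_mul_of_pos_right hsqrt_lt (by positivity)
        _ = r := by field_simp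
    linarith
  have hfin : Finite ↥X := Finite.of_injective G hGinj
  have hXfin : X.Finite := Set.finite_coe_iff.mp hfin
  refine ⟨hXfin, ?_⟩
  have hcard : Nat.card X ≤ Nat.card (∀ i, Fin (bound i)) :=
    Nat.card_le_card_of_injective G hGinj
  have hprod : Nat.card (∀ i, Fin (bound i)) = ∏ i, bound i := by
    simp [Nat.card_eq_fintype_card, Fintype.card_pi]
  have hprodval : ∏ i, bound i = m * (2 * m) ^ (d - 1) := by
    rw [← Finset.mul_prod_erase Finset.univ bound (Finset.mem_univ z)]
    have h1 : bound z = m := by simp [hbound]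
    have h2 : ∏ i ∈ Finset.univ.erase z, bound i = (2 * m) ^ (d - 1) := by
      rw [Finset.prod_congr rfl (fun i hi => ?_), Finset.prod_const,
        Finset.card_erase_of_mem (Finset.mem_univ z), Finset.card_univ, Fintype.card_fin]
      simp [hbound, Finset.mem_erase.mp hi |>.1]
    rw [h1, h2]
  have hfinal : ∀ M : ℕ, M * (2 * M) ^ (d - 1) = 2 ^ (d - 1) * M ^ d := by
    intro M
    obtain ⟨e, rfl⟩ : ∃ e, d = e + 1 := ⟨d - 1, (Nat.succ_pred_eq_of_pos hd).symm⟩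
    simp only [Nat.add_sub_cancel]
    ring
  rw [hprod, hprodval, hfinal m] at hcard
  exact hcard
end

section
/- Let v_0, v_1, …, v_{k−1} be vectors in ℝ² satisfying ‖v_i‖ > 2·∑_{j=i+1}^{k−1} ‖v_j‖ for each i. Let p = ∑_i β_{p,i} v_i and q = ∑_i β_{q,i} v_i where β_{p,i}, β_{q,i} ∈ {0,1}, and let ℓ be the smallest index with β_{p,ℓ} ≠ β_{q,ℓ}. Then ‖p − q‖ > (1/2)·‖v_ℓ‖. -/
/-!
Write `p - q = ∑ dᵢ vᵢ` with `dᵢ = βp i - βq i ∈ {-1, 0, 1}`. The coefficients vanish before `ℓ`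
and `|d_ℓ| = 1`, so by the reverse triangle inequality
`‖p - q‖ ≥ ‖v_ℓ‖ - ∑_{j > ℓ} ‖v_j‖ > ‖v_ℓ‖ - ‖v_ℓ‖ / 2`.
-/

open Finset

lemma abs_sub_le_one_of_mem_zero_one {a b : ℝ} (ha : a = 0 ∨ a = 1) (hb : b = 0 ∨ b = 1) :
    |a - b| ≤ 1 := by
  rcases ha with rfl | rfl <;> rcases hb with rfl | rfl <;> norm_num

lemma abs_sub_eq_one_of_mem_zero_one {a b : ℝ} (ha : a = 0 ∨ a = 1) (hb : b = 0 ∨ b = 1)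
    (hab : a ≠ b) : |a - b| = 1 := by
  rcases ha with rfl | rfl <;> rcases hb with rfl | rfl <;> first | exact absurd rfl hab | norm_num

lemma Finset.sum_eq_add_sum_Ioi_of_eq_zero_of_lt {ι M : Type*} [LinearOrder ι] [Fintype ι]
    [LocallyFiniteOrderTop ι] [AddCommMonoid M] {f : ι → M} {ℓ : ι} (hf : ∀ j < ℓ, f j = 0) :
    ∑ i, f i = f ℓ + ∑ i ∈ Ioi ℓ, f i := by
  rw [← sum_cons (notMem_Ioi_self (b := ℓ)), ← Ici_eq_cons_Ioi]
  exact (sum_subset (subset_univ _) fun j _ hj => hf j (not_le.mp (mem_Ici.not.mp hj))).symm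

lemma norm_sub_sum_Ioi_norm_le_norm_sum_smul {ι E : Type*} [LinearOrder ι] [Fintype ι]
    [LocallyFiniteOrderTop ι] [SeminormedAddCommGroup E] [NormedSpace ℝ E] (v : ι → E)
    {c : ι → ℝ} {ℓ : ι} (hlt : ∀ j < ℓ, c j = 0) (hℓ : |c ℓ| = 1) (hle : ∀ j, |c j| ≤ 1) :
    ‖v ℓ‖ - ∑ j ∈ Ioi ℓ, ‖v j‖ ≤ ‖∑ i, c i • v i‖ := by
  have htail : ‖∑ j ∈ Ioi ℓ, c j • v j‖ ≤ ∑ j ∈ Ioi ℓ, ‖v j‖ :=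
    norm_sum_le_of_le _ fun j _ => by
      rw [norm_smul, Real.norm_eq_abs]
      exact mul_le_of_le_one_left (norm_nonneg _) (hle j)
  have hlead : ‖c ℓ • v ℓ‖ = ‖v ℓ‖ := by rw [norm_smul, Real.norm_eq_abs, hℓ, one_mul]
  rw [sum_eq_add_sum_Ioi_of_eq_zero_of_lt fun j hj => by rw [hlt j hj, zero_smul]]
  calc ‖v ℓ‖ - ∑ j ∈ Ioi ℓ, ‖v j‖ ≤ ‖c ℓ • v ℓ‖ - ‖-∑ j ∈ Ioi ℓ, c j • v j‖ := by
        rw [hlead, norm_neg]; linarith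
    _ ≤ ‖c ℓ • v ℓ + ∑ j ∈ Ioi ℓ, c j • v j‖ := by
        simpa only [sub_neg_eq_add] using norm_sub_norm_le (c ℓ • v ℓ) (-∑ j ∈ Ioi ℓ, c j • v j)

theorem stmt_7 (k : ℕ) (v : Fin k → EuclideanSpace ℝ (Fin 2))
    (hv : ∀ i, 2 * ∑ j ∈ Finset.Ioi i, ‖v j‖ < ‖v i‖)
    (βp βq : Fin k → ℝ)
    (hβp : ∀ i, βp i = 0 ∨ βp i = 1) (hβq : ∀ i, βq i = 0 ∨ βq i = 1)
    (ℓ : Fin k) (hne : βp ℓ ≠ βq ℓ) (hmin : ∀ j < ℓ, βp j = βq j) :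
    ‖v ℓ‖ / 2 < ‖(∑ i, βp i • v i) - ∑ i, βq i • v i‖ := by
  have hdiff : (∑ i, βp i • v i) - ∑ i, βq i • v i = ∑ i, (βp i - βq i) • v i := by
    simp only [sub_smul, sum_sub_distrib]
  have hlower := norm_sub_sum_Ioi_norm_le_norm_sum_smul v (ℓ := ℓ)
    (fun j hj => sub_eq_zero.mpr (hmin j hj))
    (abs_sub_eq_one_of_mem_zero_one (hβp ℓ) (hβq ℓ) hne)
    (fun j => abs_sub_le_one_of_mem_zero_one (hβp j) (hβq j))
  rw [hdiff]
  linarith [hv ℓ]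
end

section
/- If B ≥ 0 and T(n', m') ≤ B·n' whenever n' ≤ some threshold, and T satisfies the recurrence T(n,m) ≤ 2·T(n/2,m/2) + C·n for powers of two, then T(n, m) = O(n·log(m/√n)) for m = ω(√n). Specifically, if T(n²/m², n/m) ≤ B·n²/m², then T(n, m) ≤ B·n + C·n·log₂(m²/n). -/
lemma unroll (T : ℕ → ℕ → ℕ) (C : ℕ)
    (hrec : ∀ n m : ℕ, (∃ a, n = 2 ^ a) → (∃ b, m = 2 ^ b) → m ≤ n →
      T n m ≤ 2 * T (n / 2) (m / 2) + C * n) :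
    ∀ k a b : ℕ, k ≤ b → b ≤ a →
      T (2 ^ a) (2 ^ b) ≤ 2 ^ k * T (2 ^ (a - k)) (2 ^ (b - k)) + C * 2 ^ a * k := by
  intro k
  induction k with
  | zero => intro a b _ _; simp
  | succ k ih =>
    intro a b hk hba
    have ha1 : 1 ≤ a := le_trans (le_trans (Nat.succ_le_succ (Nat.zero_le k)) hk) hba
    have hb1 : 1 ≤ b := le_trans (Nat.succ_le_succ (Nat.zero_le k)) hk
    have h1 : T (2 ^ a) (2 ^ b) ≤ 2 * T (2 ^ a / 2) (2 ^ b / 2) + C * 2 ^ a :=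
      hrec _ _ ⟨a, rfl⟩ ⟨b, rfl⟩ (Nat.pow_le_pow_right (by norm_num) hba)
    have e1 : 2 ^ a / 2 = 2 ^ (a - 1) := by
      rw [Nat.pow_div ha1 (by norm_num)]
    have e2 : 2 ^ b / 2 = 2 ^ (b - 1) := by
      rw [Nat.pow_div hb1 (by norm_num)]
    rw [e1, e2] at h1
    have h2 := ih (a - 1) (b - 1) (by omega) (by omega)
    have ea : a - 1 - k = a - (k + 1) := by omega
    have eb : b - 1 - k = b - (k + 1) := by omega
    rw [ea, eb] at h2
    calc T (2 ^ a) (2 ^ b) ≤ 2 * T (2 ^ (a - 1)) (2 ^ (b - 1)) + C * 2 ^ a := h1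
      _ ≤ 2 * (2 ^ k * T (2 ^ (a - (k + 1))) (2 ^ (b - (k + 1))) + C * 2 ^ (a - 1) * k)
            + C * 2 ^ a := by
          exact Nat.add_le_add_right (Nat.mul_le_mul_left 2 h2) _
      _ = 2 ^ (k + 1) * T (2 ^ (a - (k + 1))) (2 ^ (b - (k + 1)))
            + (2 * 2 ^ (a - 1)) * (C * k) + C * 2 ^ a := by ring
      _ = 2 ^ (k + 1) * T (2 ^ (a - (k + 1))) (2 ^ (b - (k + 1))) + C * 2 ^ a * (k + 1) := by
          have : 2 * 2 ^ (a - 1) = 2 ^ a := by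
            rw [← pow_succ']; congr 1; omega
          rw [this]; ring

theorem stmt_13 (T : ℕ → ℕ → ℕ) (B C : ℕ)
    (hrec : ∀ n m : ℕ, (∃ a, n = 2 ^ a) → (∃ b, m = 2 ^ b) → m ≤ n →
      T n m ≤ 2 * T (n / 2) (m / 2) + C * n) (a b : ℕ) (n m : ℕ) (hn : n = 2 ^ a) (hm : m = 2 ^ b)
    (hba : b ≤ a) (hlow : a < 2 * b)
    (hbase : T (n ^ 2 / m ^ 2) (n / m) ≤ B * (n ^ 2 / m ^ 2)) :
    T n m ≤ B * n + C * n * Nat.log 2 (m ^ 2 / n) := by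
  subst hn hm
  set k := 2 * b - a with hk
  have hka : k ≤ a := by omega
  have hkb : k ≤ b := by omega
  have e1 : (2 ^ a) ^ 2 / (2 ^ b) ^ 2 = 2 ^ (a - k) := by
    rw [← pow_mul, ← pow_mul, Nat.pow_div (by omega) (by norm_num)]
    congr 1; omega
  have e2 : 2 ^ a / 2 ^ b = 2 ^ (b - k) := by
    rw [Nat.pow_div hba (by norm_num)]; congr 1; omega
  have e3 : (2 ^ b) ^ 2 / 2 ^ a = 2 ^ k := by
    rw [← pow_mul, Nat.pow_div (by omega) (by norm_num)]; congr 1; omega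
  rw [e1, e2] at hbase
  have e4 : Nat.log 2 ((2 ^ b) ^ 2 / 2 ^ a) = k := by
    rw [e3, Nat.log_pow (by norm_num)]
  rw [e4]
  calc T (2 ^ a) (2 ^ b) ≤ 2 ^ k * T (2 ^ (a - k)) (2 ^ (b - k)) + C * 2 ^ a * k :=
        unroll T C hrec k a b hkb hba
    _ ≤ 2 ^ k * (B * 2 ^ (a - k)) + C * 2 ^ a * k :=
        Nat.add_le_add_right (Nat.mul_le_mul_left _ hbase) _
    _ = B * (2 ^ k * 2 ^ (a - k)) + C * 2 ^ a * k := by ring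
    _ = B * 2 ^ a + C * 2 ^ a * k := by rw [← pow_add, show k + (a - k) = a by omega]
end

section
/- Let S be a finite set of points in ℝ^d, H a vertical hyperplane {x : x₁ = a}, and let {A_i, B_i}, i = 1, …, k, be a well-separated pair decomposition of S with separation ratio s > 2 (every pair of distinct points p, q of S is separated by exactly one pair {A_i, B_i}). For each i, define a_i as the point of A_i with largest first coordinate among points with first coordinate < a, and b_i as the point of B_i with smallest first coordinate among points with first coordinate > a (when they exist), and symmetrically a'_i, b'_i. Then every pair {p, q} ⊆ S with p₁ < a < q₁ that is the closest pair of S ∩ Q for some vertical slab Q = {x : α ≤ x₁ ≤ β} containing both p and q, equals {a_i, b_i} or {a'_i, b'_i} for some i. Hence the number of such closest pairs crossing H is at most 2k. -/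
/-- The first coordinate of a point in `ℝ^d`, `d ≥ 1`. -/
def firstCoord {d : ℕ} (hd : 1 ≤ d) (p : EuclideanSpace ℝ (Fin d)) : ℝ := p ⟨0, hd⟩

private lemma ext_lemma {d : ℕ} (hd : 1 ≤ d) {S : Finset (EuclideanSpace ℝ (Fin d))}
    {a s : ℝ} (hs : 2 < s)
    {A' B' : Finset (EuclideanSpace ℝ (Fin d))}
    (hA'S : A' ⊆ S) (hB'S : B' ⊆ S)
    (hsep : ∃ (x y : EuclideanSpace ℝ (Fin d)) (ρ : ℝ),
      ↑A' ⊆ Metric.closedBall x ρ ∧ ↑B' ⊆ Metric.closedBall y ρ ∧ (s + 2) * ρ ≤ dist x y)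
    {p q : EuclideanSpace ℝ (Fin d)} (hpA : p ∈ A') (hqB : q ∈ B')
    (hpa : firstCoord hd p < a) (haq : a < firstCoord hd q)
    {α β : ℝ} (hαp : α ≤ firstCoord hd p) (hqβ : firstCoord hd q ≤ β)
    (hmin : ∀ r ∈ S, ∀ t ∈ S, r ≠ t → α ≤ firstCoord hd r → firstCoord hd r ≤ β →
      α ≤ firstCoord hd t → firstCoord hd t ≤ β → dist p q ≤ dist r t) :
    (∀ p' ∈ A', firstCoord hd p' < a → firstCoord hd p' ≤ firstCoord hd p) ∧
    (∀ q' ∈ B', a < firstCoord hd q' → firstCoord hd q ≤ firstCoord hd q') := by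
  obtain ⟨x, y, ρ, hA, hB, hxy⟩ := hsep
  have hpx : dist p x ≤ ρ := Metric.mem_closedBall.mp (hA (Finset.mem_coe.mpr hpA))
  have hqy : dist q y ≤ ρ := Metric.mem_closedBall.mp (hB (Finset.mem_coe.mpr hqB))
  have hpq_lb : s * ρ ≤ dist p q := by
    have h4 := dist_triangle4 x p q y
    have h1 : dist x p = dist p x := dist_comm _ _
    nlinarith
  have hpβ : firstCoord hd p ≤ β := le_of_lt (lt_of_lt_of_le (hpa.trans haq) hqβ)
  have hαq : α ≤ firstCoord hd q := le_of_lt (lt_of_le_of_lt hαp (hpa.trans haq))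
  constructor
  · intro p' hp' hp'a
    by_contra h
    push_neg at h
    have hne : p ≠ p' := by
      intro e; rw [e] at h; exact lt_irrefl _ h
    have hle : dist p q ≤ dist p p' :=
      hmin p (hA'S hpA) p' (hA'S hp') hne hαp hpβ (hαp.trans h.le)
        (le_of_lt (hp'a.trans_le (haq.le.trans hqβ)))
    have hp'x : dist p' x ≤ ρ := Metric.mem_closedBall.mp (hA (Finset.mem_coe.mpr hp'))
    have hpp' : dist p p' ≤ 2 * ρ := by
      have := dist_triangle p x p'
      have h2 : dist x p' = dist p' x := dist_comm _ _
      linarith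
    have hρ : ρ ≤ 0 := by nlinarith
    have : dist p p' ≤ 0 := by linarith
    have : p = p' := by
      have := dist_nonneg (x := p) (y := p')
      exact dist_le_zero.mp (by linarith)
    exact hne this
  · intro q' hq' haq'
    by_contra h
    push_neg at h
    have hne : q ≠ q' := by
      intro e; rw [e] at h; exact lt_irrefl _ h
    have hle : dist p q ≤ dist q q' :=
      hmin q (hB'S hqB) q' (hB'S hq') hne hαq hqβ (hαp.trans (hpa.trans haq').le)
        (h.le.trans hqβ)
    have hq'y : dist q' y ≤ ρ := Metric.mem_closedBall.mp (hB (Finset.mem_coe.mpr hq'))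
    have hqq' : dist q q' ≤ 2 * ρ := by
      have := dist_triangle q y q'
      have h2 : dist y q' = dist q' y := dist_comm _ _
      linarith
    have hρ : ρ ≤ 0 := by nlinarith
    have : q = q' := by
      have := dist_nonneg (x := q) (y := q')
      exact dist_le_zero.mp (by linarith)
    exact hne this

theorem stmt_18 (d : ℕ) (hd : 1 ≤ d) (S : Finset (EuclideanSpace ℝ (Fin d)))
    (hcoord : ∀ p ∈ S, ∀ q ∈ S, p ≠ q → firstCoord hd p ≠ firstCoord hd q)
    (hdistinct : ∀ p ∈ S, ∀ q ∈ S, ∀ p' ∈ S, ∀ q' ∈ S, p ≠ q → p' ≠ q' →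
      ({p, q} : Set (EuclideanSpace ℝ (Fin d))) ≠ {p', q'} → dist p q ≠ dist p' q')
    (a : ℝ) (s : ℝ) (hs : 2 < s) (k : ℕ)
    (A B : Fin k → Finset (EuclideanSpace ℝ (Fin d)))
    (hAS : ∀ i, A i ⊆ S) (hBS : ∀ i, B i ⊆ S)
    (hwellsep : ∀ i, ∃ (x y : EuclideanSpace ℝ (Fin d)) (ρ : ℝ),
      ↑(A i) ⊆ Metric.closedBall x ρ ∧ ↑(B i) ⊆ Metric.closedBall y ρ ∧
      (s + 2) * ρ ≤ dist x y)
    (hcover : ∀ p ∈ S, ∀ q ∈ S, p ≠ q →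
      ∃! i, (p ∈ A i ∧ q ∈ B i) ∨ (p ∈ B i ∧ q ∈ A i)) :
    (∀ p ∈ S, ∀ q ∈ S, firstCoord hd p < a → a < firstCoord hd q →
      (∃ α β : ℝ, α ≤ firstCoord hd p ∧ firstCoord hd q ≤ β ∧
        ∀ r ∈ S, ∀ t ∈ S, r ≠ t →
          α ≤ firstCoord hd r → firstCoord hd r ≤ β →
          α ≤ firstCoord hd t → firstCoord hd t ≤ β → dist p q ≤ dist r t) →
      ∃ i, (p ∈ A i ∧ q ∈ B i ∧
              (∀ p' ∈ A i, firstCoord hd p' < a → firstCoord hd p' ≤ firstCoord hd p) ∧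
              (∀ q' ∈ B i, a < firstCoord hd q' → firstCoord hd q ≤ firstCoord hd q')) ∨
            (p ∈ B i ∧ q ∈ A i ∧
              (∀ p' ∈ B i, firstCoord hd p' < a → firstCoord hd p' ≤ firstCoord hd p) ∧
              (∀ q' ∈ A i, a < firstCoord hd q' → firstCoord hd q ≤ firstCoord hd q'))) ∧
    Nat.card {P : Set (EuclideanSpace ℝ (Fin d)) |
      ∃ p ∈ S, ∃ q ∈ S, P = {p, q} ∧ firstCoord hd p < a ∧ a < firstCoord hd q ∧
        ∃ α β : ℝ, α ≤ firstCoord hd p ∧ firstCoord hd q ≤ β ∧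
          ∀ r ∈ S, ∀ t ∈ S, r ≠ t →
            α ≤ firstCoord hd r → firstCoord hd r ≤ β →
            α ≤ firstCoord hd t → firstCoord hd t ≤ β → dist p q ≤ dist r t} ≤ 2 * k := by
  have main : ∀ p ∈ S, ∀ q ∈ S, firstCoord hd p < a → a < firstCoord hd q →
      (∃ α β : ℝ, α ≤ firstCoord hd p ∧ firstCoord hd q ≤ β ∧
        ∀ r ∈ S, ∀ t ∈ S, r ≠ t →
          α ≤ firstCoord hd r → firstCoord hd r ≤ β →
          α ≤ firstCoord hd t → firstCoord hd t ≤ β → dist p q ≤ dist r t) →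
      ∃ i, (p ∈ A i ∧ q ∈ B i ∧
              (∀ p' ∈ A i, firstCoord hd p' < a → firstCoord hd p' ≤ firstCoord hd p) ∧
              (∀ q' ∈ B i, a < firstCoord hd q' → firstCoord hd q ≤ firstCoord hd q')) ∨
            (p ∈ B i ∧ q ∈ A i ∧
              (∀ p' ∈ B i, firstCoord hd p' < a → firstCoord hd p' ≤ firstCoord hd p) ∧
              (∀ q' ∈ A i, a < firstCoord hd q' → firstCoord hd q ≤ firstCoord hd q')) := by
    rintro p hp q hq hpa haq ⟨α, β, hαp, hqβ, hmin⟩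
    have hpq : p ≠ q := by
      intro e
      rw [e] at hpa
      exact absurd (hpa.trans haq) (lt_irrefl _)
    obtain ⟨i, hi, -⟩ := hcover p hp q hq hpq
    refine ⟨i, ?_⟩
    rcases hi with ⟨hpA, hqB⟩ | ⟨hpB, hqA⟩
    · left
      have h := ext_lemma hd hs (hAS i) (hBS i) (hwellsep i) hpA hqB hpa haq hαp hqβ hmin
      exact ⟨hpA, hqB, h.1, h.2⟩
    · right
      have hsep : ∃ (x y : EuclideanSpace ℝ (Fin d)) (ρ : ℝ),
          ↑(B i) ⊆ Metric.closedBall x ρ ∧ ↑(A i) ⊆ Metric.closedBall y ρ ∧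
          (s + 2) * ρ ≤ dist x y := by
        obtain ⟨x, y, ρ, h1, h2, h3⟩ := hwellsep i
        exact ⟨y, x, ρ, h2, h1, by rwa [dist_comm]⟩
      have h := ext_lemma hd hs (hBS i) (hAS i) hsep hpB hqA hpa haq hαp hqβ hmin
      exact ⟨hpB, hqA, h.1, h.2⟩
  refine ⟨main, ?_⟩
  set T : Set (Set (EuclideanSpace ℝ (Fin d))) :=
    {P : Set (EuclideanSpace ℝ (Fin d)) |
      ∃ p ∈ S, ∃ q ∈ S, P = {p, q} ∧ firstCoord hd p < a ∧ a < firstCoord hd q ∧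
        ∃ α β : ℝ, α ≤ firstCoord hd p ∧ firstCoord hd q ≤ β ∧
          ∀ r ∈ S, ∀ t ∈ S, r ≠ t →
            α ≤ firstCoord hd r → firstCoord hd r ≤ β →
            α ≤ firstCoord hd t → firstCoord hd t ≤ β → dist p q ≤ dist r t} with hT
  let Good : Set (EuclideanSpace ℝ (Fin d)) → Fin k × Bool → Prop := fun P ib =>
    ∃ p q, p ∈ S ∧ q ∈ S ∧ P = {p, q} ∧ firstCoord hd p < a ∧ a < firstCoord hd q ∧
      ((ib.2 = true ∧ p ∈ A ib.1 ∧ q ∈ B ib.1 ∧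
          (∀ p' ∈ A ib.1, firstCoord hd p' < a → firstCoord hd p' ≤ firstCoord hd p) ∧
          (∀ q' ∈ B ib.1, a < firstCoord hd q' → firstCoord hd q ≤ firstCoord hd q')) ∨
       (ib.2 = false ∧ p ∈ B ib.1 ∧ q ∈ A ib.1 ∧
          (∀ p' ∈ B ib.1, firstCoord hd p' < a → firstCoord hd p' ≤ firstCoord hd p) ∧
          (∀ q' ∈ A ib.1, a < firstCoord hd q' → firstCoord hd q ≤ firstCoord hd q')))
  have hex : ∀ P : T, ∃ ib : Fin k × Bool, Good P.1 ib := by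
    rintro ⟨P, hP⟩
    obtain ⟨p, hp, q, hq, rfl, hpa, haq, hslab⟩ := hP
    obtain ⟨i, hcase⟩ := main p hp q hq hpa haq hslab
    rcases hcase with h | h
    · exact ⟨(i, true), p, q, hp, hq, rfl, hpa, haq, Or.inl ⟨rfl, h⟩⟩
    · exact ⟨(i, false), p, q, hp, hq, rfl, hpa, haq, Or.inr ⟨rfl, h⟩⟩
  have coord_eq : ∀ p ∈ S, ∀ p' ∈ S, firstCoord hd p = firstCoord hd p' → p = p' := by
    intro p hp p' hp' h
    by_contra hne
    exact hcoord p hp p' hp' hne h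
  have huniq : ∀ (P P' : Set (EuclideanSpace ℝ (Fin d))) (ib : Fin k × Bool),
      Good P ib → Good P' ib → P = P' := by
    rintro P P' ⟨i, b⟩ ⟨p, q, hp, hq, rfl, hpa, haq, hc⟩
      ⟨p', q', hp', hq', rfl, hpa', haq', hc'⟩
    rcases hc with ⟨hb, hpA, hqB, hextp, hextq⟩ | ⟨hb, hpA, hqB, hextp, hextq⟩ <;>
      rcases hc' with ⟨hb', hpA', hqB', hextp', hextq'⟩ | ⟨hb', hpA', hqB', hextp', hextq'⟩
    · have e1 : p = p' := coord_eq p hp p' hp'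
        (le_antisymm (hextp' p hpA hpa) (hextp p' hpA' hpa'))
      have e2 : q = q' := coord_eq q hq q' hq'
        (le_antisymm (hextq q' hqB' haq') (hextq' q hqB haq))
      rw [e1, e2]
    · exact absurd (hb.symm.trans hb') (by simp)
    · exact absurd (hb'.symm.trans hb) (by simp)
    · have e1 : p = p' := coord_eq p hp p' hp'
        (le_antisymm (hextp' p hpA hpa) (hextp p' hpA' hpa'))
      have e2 : q = q' := coord_eq q hq q' hq'
        (le_antisymm (hextq q' hqB' haq') (hextq' q hqB haq))
      rw [e1, e2]
  choose f hf using hex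
  have hinj : Function.Injective f := by
    intro P P' h
    exact Subtype.ext (huniq _ _ _ (hf P) (h ▸ hf P'))
  calc Nat.card T ≤ Nat.card (Fin k × Bool) := Nat.card_le_card_of_injective f hinj
    _ = 2 * k := by simp [Nat.card_eq_fintype_card, Nat.mul_comm]
end

section
/- Let n and m be positive integers with n ≥ m(m+1) and m | n. There exists a set S of n points in ℝ² with distinct first coordinates and distinct pairwise distances, and hyperplanes H_1, …, H_{m+1} at x-coordinates 1, …, m+1 each consecutive pair bounding exactly n/m points of S, such that the (m+1 choose 2) vertical slabs [H_i, H_j] (1 ≤ i < j ≤ m+1) all have pairwise distinct closest pairs; i.e., |A(S, m)| = (m+1 choose 2). -/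
/-!
Index the points by `(k, t)` with `k < m` and `t < n / m`, the point `(k, t)` lying strictly
between `H_{k+1}` and `H_{k+2}`. Its height is `3 ^ w * 8m²` plus an integer shift in `[0, 2m²]`,
where the window `w` is shared by `(k, t)` and `(t, k)` only. As `|3 ^ a - 3 ^ b|` determines
`{a, b}` and horizontal distances are below `m`, pairs whose windows are at different gaps have
distinct distances, and a pair sharing a window is closer than any pair that does not. For `a < b`
the pair `{(a, b), (b, a)}` spans exactly the slabs between `H_{a+1}` and `H_{b+2}`, and the shift
`2m² - (m (b - a) + a)` of `(b, a)` decreases with the width `b - a`: this pair is the closest pair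
of that slab, and wider slabs have closer pairs. The integrality of the shifts separates the
distances of different pairs lying in the same two windows. Finally, a closest pair of `[H_i, H_j]`
has its points in the first and the last slab between `H_i` and `H_j`, so it determines `(i, j)`.
-/

section ClosestPair

variable {α : Type*} [Dist α]

def IsClosestPair (S : Finset α) (U : Set α) (p q : α) : Prop :=
  p ∈ S ∧ q ∈ S ∧ p ≠ q ∧ p ∈ U ∧ q ∈ U ∧
    ∀ r ∈ S, ∀ t ∈ S, r ≠ t → r ∈ U → t ∈ U → dist p q ≤ dist r t

theorem exists_isClosestPair {S : Finset α} {U : Set α} {p q : α} (hp : p ∈ S) (hq : q ∈ S)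
    (hpq : p ≠ q) (hpU : p ∈ U) (hqU : q ∈ U) : ∃ p q, IsClosestPair S U p q := by
  classical
  obtain ⟨⟨a, b⟩, hab, hmin⟩ := ((S.filter (· ∈ U)).offDiag).exists_min_image
    (fun x => dist x.1 x.2) ⟨(p, q), by simp [hp, hq, hpq, hpU, hqU]⟩
  simp only [Finset.mem_offDiag, Finset.mem_filter] at hab
  exact ⟨a, b, hab.1.1, hab.2.1.1, hab.2.2, hab.1.2, hab.2.1.2,
    fun r hr t ht hrt hrU htU => hmin (r, t) (by simp [*])⟩

theorem IsClosestPair.pair_eq {S : Finset α} {U : Set α} {p q p' q' : α}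
    (hS : ∀ p ∈ S, ∀ q ∈ S, ∀ p' ∈ S, ∀ q' ∈ S, p ≠ q → p' ≠ q' →
      ({p, q} : Set α) ≠ {p', q'} → dist p q ≠ dist p' q')
    (h : IsClosestPair S U p q) (h' : IsClosestPair S U p' q') :
    ({p, q} : Set α) = {p', q'} := by
  obtain ⟨hp, hq, hpq, hpU, hqU, hmin⟩ := h
  obtain ⟨hp', hq', hpq', hpU', hqU', hmin'⟩ := h'
  by_contra hne
  exact hS p hp q hq p' hp' q' hq' hpq hpq' hne
    (le_antisymm (hmin p' hp' q' hq' hpq' hpU' hqU') (hmin' p hp q hq hpq hpU hqU))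

end ClosestPair

theorem sq_add_sq_lt_sq_add_sq_of_gap {T A M c c' dx dx' W W' s s' : ℝ}
    (hW : |W| = c * T) (hW' : |W'| = c' * T) (hc : 0 ≤ c) (hcc' : c + 1 ≤ c')
    (hs : |s| ≤ A) (hs' : |s'| ≤ A) (hdx : dx ^ 2 ≤ M) (hAT : 2 * A ≤ T)
    (hM : M < (T - 2 * A) * T) :
    dx ^ 2 + (W + s) ^ 2 < dx' ^ 2 + (W' + s') ^ 2 := by
  have hA : 0 ≤ A := (abs_nonneg s).trans hs
  have hT : 0 ≤ T := by linarith
  have hup : (W + s) ^ 2 ≤ (c * T + A) ^ 2 := by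
    rw [← sq_abs]
    exact pow_le_pow_left₀ (abs_nonneg _) ((abs_add_le W s).trans (by rw [hW]; linarith)) 2
  have hlow : ((c + 1) * T - A) ^ 2 ≤ (W' + s') ^ 2 := by
    rw [← sq_abs (W' + s')]
    refine pow_le_pow_left₀ (by nlinarith) ?_ 2
    nlinarith [abs_sub_abs_le_abs_add W' s']
  nlinarith [sq_nonneg dx', mul_nonneg (mul_nonneg hc hT) (sub_nonneg.2 hAT)]

theorem sq_add_sq_ne_of_one_le_abs_sub {T A M dx dx' W s s' : ℝ} (hW : T ≤ |W|)
    (hs : |s| ≤ A) (hs' : |s'| ≤ A) (hss' : 1 ≤ |s - s'|) (hdx : dx ^ 2 ≤ M)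
    (hdx' : dx' ^ 2 ≤ M) (hM : M < 2 * (T - A)) :
    dx ^ 2 + (W + s) ^ 2 ≠ dx' ^ 2 + (W + s') ^ 2 := by
  intro h
  have hsum : 2 * (T - A) ≤ |2 * W + (s + s')| := by
    have := abs_sub_abs_le_abs_add (2 * W) (s + s')
    have := abs_add_le s s'
    rw [abs_mul, abs_two] at *
    linarith
  have hlow : 2 * (T - A) ≤ |(W + s) ^ 2 - (W + s') ^ 2| := by
    rw [show (W + s) ^ 2 - (W + s') ^ 2 = (s - s') * (2 * W + (s + s')) by ring, abs_mul]
    nlinarith [abs_nonneg (2 * W + (s + s'))]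
  have hup : |(W + s) ^ 2 - (W + s') ^ 2| ≤ M := by
    rw [abs_le]; constructor <;> nlinarith [sq_nonneg dx, sq_nonneg dx']
  linarith

theorem sq_add_sq_lt_sq_add_sq {M dx dx' v v' : ℝ} (hdx : dx ^ 2 ≤ M) (hv : 0 ≤ v)
    (hvv' : v + 1 ≤ v') (hM : M < v + v') : dx ^ 2 + v ^ 2 < dx' ^ 2 + v' ^ 2 := by
  nlinarith [sq_nonneg dx', mul_nonneg (sub_nonneg.2 hvv') (by linarith : 0 ≤ v + v')]

theorem three_pow_sub_lt_three_pow_sub {a b a' b' : ℕ} (hb' : b' < a')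
    (ha : a < a') : (3 : ℤ) ^ a - 3 ^ b < 3 ^ a' - 3 ^ b' := by
  have h1 : (3 : ℤ) ^ (a + 1) ≤ 3 ^ a' := pow_le_pow_right₀ (by norm_num) ha
  have h2 : (3 : ℤ) ^ (b' + 1) ≤ 3 ^ a' := pow_le_pow_right₀ (by norm_num) hb'
  rw [pow_succ] at h1 h2
  linarith [pow_pos (by norm_num : (0 : ℤ) < 3) b, pow_pos (by norm_num : (0 : ℤ) < 3) a']

theorem eq_of_three_pow_sub_eq {a b a' b' : ℕ} (hb : b < a) (hb' : b' < a')
    (h : (3 : ℤ) ^ a - 3 ^ b = 3 ^ a' - 3 ^ b') : a = a' ∧ b = b' := by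
  obtain rfl : a = a' := by
    rcases lt_trichotomy a a' with ha | ha | ha
    · exact absurd h (three_pow_sub_lt_three_pow_sub hb' ha).ne
    · exact ha
    · exact absurd h (three_pow_sub_lt_three_pow_sub hb ha).ne'
  exact ⟨rfl, pow_right_injective₀ (by norm_num : (0 : ℤ) < 3) (by norm_num) (by linarith)⟩

theorem abs_three_pow_sub (a b : ℕ) :
    |(3 : ℤ) ^ a - 3 ^ b| = 3 ^ max a b - 3 ^ min a b := by
  rcases le_total a b with h | h
  · rw [max_eq_right h, min_eq_left h, abs_sub_comm,
      abs_of_nonneg (sub_nonneg.2 (pow_le_pow_right₀ (by norm_num) h))]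
  · rw [max_eq_left h, min_eq_right h,
      abs_of_nonneg (sub_nonneg.2 (pow_le_pow_right₀ (by norm_num) h))]

theorem abs_three_pow_sub_eq_zero_iff {a b : ℕ} : |(3 : ℤ) ^ a - 3 ^ b| = 0 ↔ a = b := by
  rw [abs_eq_zero, sub_eq_zero]
  exact (pow_right_injective₀ (by norm_num : (0 : ℤ) < 3) (by norm_num)).eq_iff

theorem eq_or_eq_of_abs_three_pow_sub_eq {a b a' b' : ℕ} (hab : a ≠ b)
    (h : |(3 : ℤ) ^ a - 3 ^ b| = |(3 : ℤ) ^ a' - 3 ^ b'|) :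
    (a = a' ∧ b = b') ∨ (a = b' ∧ b = a') := by
  have hab' : a' ≠ b' := by
    rintro rfl
    rw [sub_self, abs_zero, abs_three_pow_sub_eq_zero_iff] at h
    exact hab h
  rw [abs_three_pow_sub, abs_three_pow_sub] at h
  have := eq_of_three_pow_sub_eq (by omega) (by omega) h
  omega

theorem mul_add_lt_mul_add {m q q' r r' : ℕ} (hr : r < m) (hq : q < q') :
    m * q + r < m * q' + r' := by
  nlinarith

theorem eq_and_eq_of_mul_add_eq {m q q' r r' : ℕ} (hr : r < m) (hr' : r' < m)
    (h : m * q + r = m * q' + r') : q = q' ∧ r = r' := by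
  rcases lt_trichotomy q q' with hq | rfl | hq
  · exact absurd h (mul_add_lt_mul_add hr hq).ne
  · omega
  · exact absurd h (mul_add_lt_mul_add hr' hq).ne'

noncomputable section

namespace SlabConstruction

open Finset

local notation "E" => EuclideanSpace ℝ (Fin 2)

variable {m K i j : ℕ} {p q p' q' r r' : ℕ × ℕ} {x y : E}

def grid (m K : ℕ) : Finset (ℕ × ℕ) := range m ×ˢ range K

theorem mem_grid : p ∈ grid m K ↔ p.1 < m ∧ p.2 < K := by
  simp [grid]

def xCoord (K : ℕ) (p : ℕ × ℕ) : ℝ := p.1 + 1 + (p.2 + 1) / (K + 1)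

def window (K : ℕ) (p : ℕ × ℕ) : ℕ := K * min p.1 p.2 + max p.1 p.2

def pairCode (m : ℕ) (p : ℕ × ℕ) : ℕ := m * (max p.1 p.2 - min p.1 p.2) + min p.1 p.2

def pairWeight (m : ℕ) (p : ℕ × ℕ) : ℤ := 2 * m ^ 2 - pairCode m p

def shift (m : ℕ) (p : ℕ × ℕ) : ℤ := if p.2 < p.1 then pairWeight m p else 0

-- The scale `8 m²` dominates the shifts, at most `2 m²`, and the squared horizontal distances,
-- at most `m²`.
def yCoord (m K : ℕ) (p : ℕ × ℕ) : ℝ := 3 ^ window K p * (8 * m ^ 2) + shift m p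

def point (m K : ℕ) (p : ℕ × ℕ) : E := !₂[xCoord K p, yCoord m K p]

open Classical in
def pointSet (m K : ℕ) : Finset E := (grid m K).image (point m K)

def slab (i j : ℕ) : Set E := {x | (i : ℝ) ≤ x 0 ∧ x 0 ≤ j}

theorem point_apply_zero : point m K p 0 = xCoord K p := rfl

theorem xCoord_bounds (hp : p.2 < K) : (p.1 + 1 : ℝ) < xCoord K p ∧ xCoord K p < p.1 + 2 := by
  have hK : (p.2 + 1 : ℝ) < K + 1 := by exact_mod_cast Nat.succ_lt_succ hp
  have h0 : 0 < (p.2 + 1 : ℝ) / (K + 1) := by positivity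
  have h1 : (p.2 + 1 : ℝ) / (K + 1) < 1 := (div_lt_one (by positivity)).2 hK
  constructor <;> unfold xCoord <;> linarith

theorem xCoord_nonneg : 0 ≤ xCoord K p := by
  unfold xCoord
  positivity

theorem floor_xCoord (hp : p.2 < K) : ⌊xCoord K p⌋₊ = p.1 + 1 := by
  obtain ⟨h1, h2⟩ := xCoord_bounds hp
  rw [Nat.floor_eq_iff xCoord_nonneg]
  push_cast
  constructor <;> linarith

theorem ceil_xCoord (hp : p.2 < K) : ⌈xCoord K p⌉₊ = p.1 + 2 := by
  obtain ⟨h1, h2⟩ := xCoord_bounds hp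
  rw [Nat.ceil_eq_iff (by omega), show p.1 + 2 - 1 = p.1 + 1 by omega]
  push_cast
  constructor <;> linarith

theorem point_mem_slab_iff (hp : p.2 < K) :
    point m K p ∈ slab i j ↔ i ≤ p.1 + 1 ∧ p.1 + 2 ≤ j := by
  show (i : ℝ) ≤ xCoord K p ∧ xCoord K p ≤ j ↔ _
  rw [← Nat.le_floor_iff xCoord_nonneg, ← Nat.ceil_le, floor_xCoord hp, ceil_xCoord hp]

theorem natCast_lt_xCoord_and_xCoord_lt_iff (hp : p.2 < K) :
    ((i : ℝ) < xCoord K p ∧ xCoord K p < i + 1) ↔ p.1 + 1 = i := by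
  rw [← Nat.cast_succ, ← Nat.lt_ceil, ← Nat.floor_lt xCoord_nonneg, floor_xCoord hp,
    ceil_xCoord hp]
  omega

theorem eq_of_xCoord_eq (hp : p.2 < K) (hq : q.2 < K) (h : xCoord K p = xCoord K q) :
    p = q := by
  have h1 : p.1 = q.1 := by
    have := floor_xCoord hp
    rw [h, floor_xCoord hq] at this
    omega
  have h2 : (p.2 : ℝ) = q.2 := by
    unfold xCoord at h
    rw [h1, add_right_inj, div_left_inj' (by positivity)] at h
    linarith
  exact Prod.ext h1 (by exact_mod_cast h2)

theorem sq_xCoord_sub_le (hp : p ∈ grid m K) (hq : q ∈ grid m K) :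
    (xCoord K p - xCoord K q) ^ 2 ≤ m ^ 2 := by
  rw [mem_grid] at hp hq
  obtain ⟨hp1, hp2⟩ := xCoord_bounds hp.2
  obtain ⟨hq1, hq2⟩ := xCoord_bounds hq.2
  have : (p.1 : ℝ) + 1 ≤ m := by exact_mod_cast hp.1
  have : (q.1 : ℝ) + 1 ≤ m := by exact_mod_cast hq.1
  have : (0 : ℝ) ≤ p.1 := p.1.cast_nonneg
  have : (0 : ℝ) ≤ q.1 := q.1.cast_nonneg
  rw [← sq_abs]
  exact pow_le_pow_left₀ (abs_nonneg _) (abs_le.2 ⟨by linarith, by linarith⟩) 2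

theorem window_swap (K : ℕ) (p : ℕ × ℕ) : window K p.swap = window K p := by
  simp [window, min_comm, max_comm]

theorem eq_or_eq_swap_of_window_eq (hK : m ≤ K) (hp : p ∈ grid m K) (hq : q ∈ grid m K)
    (h : window K p = window K q) : q = p ∨ (p.1 ≠ p.2 ∧ q = p.swap) := by
  rw [mem_grid] at hp hq
  have := eq_and_eq_of_mul_add_eq (by omega : max p.1 p.2 < K) (by omega : max q.1 q.2 < K) h
  obtain ⟨a, b⟩ := p
  obtain ⟨c, d⟩ := q
  simp only [Prod.swap_prod_mk, Prod.mk.injEq, ne_eq] at *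
  omega

theorem pairCode_swap (m : ℕ) (p : ℕ × ℕ) : pairCode m p.swap = pairCode m p := by
  simp [pairCode, min_comm, max_comm]

theorem pairCode_lt (hp1 : p.1 < m) (hp2 : p.2 < m) : pairCode m p < m ^ 2 := by
  have := mul_add_lt_mul_add (r' := 0) (by omega : min p.1 p.2 < m)
    (by omega : max p.1 p.2 - min p.1 p.2 < m)
  rw [pairCode, sq]
  simpa using this

theorem window_eq_of_pairCode_eq (hp1 : p.1 < m) (hp2 : p.2 < m) (hq1 : q.1 < m)
    (hq2 : q.2 < m) (h : pairCode m p = pairCode m q) : window K p = window K q := by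
  have := eq_and_eq_of_mul_add_eq (by omega : min p.1 p.2 < m) (by omega : min q.1 q.2 < m) h
  rw [window, window, show max p.1 p.2 = max q.1 q.2 by omega, this.2]

theorem pairCode_lt_or_eq {a b : ℕ} (hb : b < m) (hr1 : a ≤ r.1) (hr1' : r.1 ≤ b)
    (hr2 : a ≤ r.2) (hr2' : r.2 ≤ b) :
    pairCode m r < pairCode m (a, b) ∨ r = (a, b) ∨ r = (b, a) := by
  by_cases h : min r.1 r.2 = a ∧ max r.1 r.2 = b
  · right
    obtain ⟨c, d⟩ := r
    simp only [Prod.mk.injEq] at *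
    omega
  · exact Or.inl (mul_add_lt_mul_add (by omega : min r.1 r.2 < m)
      (by omega : max r.1 r.2 - min r.1 r.2 < max a b - min a b))

theorem sq_lt_pairWeight (hp1 : p.1 < m) (hp2 : p.2 < m) : (m : ℤ) ^ 2 < pairWeight m p := by
  have : (pairCode m p : ℤ) < m ^ 2 := by exact_mod_cast pairCode_lt hp1 hp2
  rw [pairWeight]
  linarith

theorem abs_shift_sub_shift_swap (hp1 : p.1 < m) (hp2 : p.2 < m) (hne : p.1 ≠ p.2) :
    |shift m p - shift m p.swap| = pairWeight m p := by
  have hpos := sq_lt_pairWeight hp1 hp2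
  have hw : pairWeight m p.swap = pairWeight m p := by rw [pairWeight, pairWeight, pairCode_swap]
  rcases lt_or_gt_of_ne hne with h | h
  · rw [shift, shift, Prod.fst_swap, Prod.snd_swap, if_neg (not_lt.2 h.le), if_pos h, hw,
      zero_sub, abs_neg, abs_of_pos ((sq_nonneg _).trans_lt hpos)]
  · rw [shift, shift, Prod.fst_swap, Prod.snd_swap, if_pos h, if_neg (not_lt.2 h.le), sub_zero,
      abs_of_pos ((sq_nonneg _).trans_lt hpos)]

theorem shift_nonneg_and_le (hp : p.1 < m) : 0 ≤ shift m p ∧ shift m p ≤ 2 * m ^ 2 := by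
  unfold shift
  split_ifs with h
  · have := sq_lt_pairWeight hp (h.trans hp)
    exact ⟨(sq_nonneg _).trans this.le, by simp [pairWeight]⟩
  · exact ⟨le_rfl, by positivity⟩

theorem abs_shift_sub_le (hp : p.1 < m) (hq : q.1 < m) :
    |(shift m p : ℝ) - shift m q| ≤ 2 * m ^ 2 := by
  obtain ⟨h1, h2⟩ := shift_nonneg_and_le hp
  obtain ⟨h3, h4⟩ := shift_nonneg_and_le hq
  have : |shift m p - shift m q| ≤ 2 * (m : ℤ) ^ 2 := abs_le.2 ⟨by linarith, by linarith⟩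
  exact_mod_cast this

theorem dist_point_sq (p q : ℕ × ℕ) :
    dist (point m K p) (point m K q) ^ 2 = (xCoord K p - xCoord K q) ^ 2 +
      (((3 : ℝ) ^ window K p - 3 ^ window K q) * (8 * m ^ 2) + (shift m p - shift m q)) ^ 2 := by
  rw [EuclideanSpace.dist_eq, Real.sq_sqrt (by positivity), Fin.sum_univ_two]
  simp only [point, yCoord, Real.dist_eq, sq_abs, Fin.isValue, Matrix.cons_val_zero,
    Matrix.cons_val_one, Matrix.cons_val_fin_one, add_right_inj]
  ring

theorem one_le_of_mem_grid (hp : p ∈ grid m K) : (1 : ℝ) ≤ m := by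
  have := (mem_grid.1 hp).1
  exact_mod_cast (by omega : 1 ≤ m)

theorem dist_point_sq_lt_of_abs_pow_sub_lt (hp : p ∈ grid m K) (hq : q ∈ grid m K)
    (hp' : p' ∈ grid m K) (hq' : q' ∈ grid m K)
    (h : |(3 : ℤ) ^ window K p - 3 ^ window K q| < |(3 : ℤ) ^ window K p' - 3 ^ window K q'|) :
    dist (point m K p) (point m K q) ^ 2 < dist (point m K p') (point m K q') ^ 2 := by
  have hm := one_le_of_mem_grid hp
  have hc : ((|(3 : ℤ) ^ window K p - 3 ^ window K q| : ℤ) : ℝ) + 1 ≤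
      ((|(3 : ℤ) ^ window K p' - 3 ^ window K q'| : ℤ) : ℝ) := by exact_mod_cast h
  push_cast at hc
  rw [dist_point_sq, dist_point_sq]
  have hT : (0 : ℝ) ≤ 8 * m ^ 2 := by positivity
  exact sq_add_sq_lt_sq_add_sq_of_gap (T := 8 * m ^ 2) (A := 2 * m ^ 2)
    (by rw [abs_mul, abs_of_nonneg hT]) (by rw [abs_mul, abs_of_nonneg hT]) (abs_nonneg _) hc
    (abs_shift_sub_le (mem_grid.1 hp).1 (mem_grid.1 hq).1)
    (abs_shift_sub_le (mem_grid.1 hp').1 (mem_grid.1 hq').1) (sq_xCoord_sub_le hp hq)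
    (by nlinarith) (by nlinarith [one_le_pow₀ (n := 2) hm])

theorem dist_point_swap_sq (p : ℕ × ℕ) :
    dist (point m K p) (point m K p.swap) ^ 2 =
      (xCoord K p - xCoord K p.swap) ^ 2 + ((|shift m p - shift m p.swap| : ℤ) : ℝ) ^ 2 := by
  rw [dist_point_sq, window_swap]
  push_cast
  rw [sq_abs]
  ring

theorem dist_point_swap_sq_lt (hp : p ∈ grid m K) (hp' : p.swap ∈ grid m K) (hp12 : p.1 ≠ p.2)
    (hq : q ∈ grid m K) (hq' : q.swap ∈ grid m K) (hq12 : q.1 ≠ q.2)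
    (h : pairCode m q < pairCode m p) :
    dist (point m K p) (point m K p.swap) ^ 2 < dist (point m K q) (point m K q.swap) ^ 2 := by
  have hwp := sq_lt_pairWeight (mem_grid.1 hp).1 (mem_grid.1 hp').1
  have hwq := sq_lt_pairWeight (mem_grid.1 hq).1 (mem_grid.1 hq').1
  have hlt : pairWeight m p + 1 ≤ pairWeight m q := by
    have : (pairCode m q : ℤ) < pairCode m p := by exact_mod_cast h
    rw [pairWeight, pairWeight]
    linarith
  rw [dist_point_swap_sq, dist_point_swap_sq,
    abs_shift_sub_shift_swap (mem_grid.1 hp).1 (mem_grid.1 hp').1 hp12,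
    abs_shift_sub_shift_swap (mem_grid.1 hq).1 (mem_grid.1 hq').1 hq12]
  have hwp' : ((m : ℤ) : ℝ) ^ 2 < (pairWeight m p : ℝ) := by exact_mod_cast hwp
  have hwq' : ((m : ℤ) : ℝ) ^ 2 < (pairWeight m q : ℝ) := by exact_mod_cast hwq
  push_cast at hwp' hwq'
  exact sq_add_sq_lt_sq_add_sq (sq_xCoord_sub_le hp hp') (by nlinarith) (by exact_mod_cast hlt)
    (by nlinarith)

theorem dist_point_swap_sq_ne (hK : m ≤ K) (hp : p ∈ grid m K) (hp' : p.swap ∈ grid m K)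
    (hp12 : p.1 ≠ p.2) (hq : q ∈ grid m K) (hq' : q.swap ∈ grid m K) (hq12 : q.1 ≠ q.2)
    (hne : q ≠ p) (hne' : q ≠ p.swap) :
    dist (point m K p) (point m K p.swap) ^ 2 ≠ dist (point m K q) (point m K q.swap) ^ 2 := by
  rcases lt_trichotomy (pairCode m q) (pairCode m p) with h | h | h
  · exact (dist_point_swap_sq_lt hp hp' hp12 hq hq' hq12 h).ne
  · have hw := window_eq_of_pairCode_eq (K := K) (mem_grid.1 hp).1 (mem_grid.1 hp').1
      (mem_grid.1 hq).1 (mem_grid.1 hq').1 h.symm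
    rcases eq_or_eq_swap_of_window_eq hK hp hq hw with h' | ⟨-, h'⟩
    exacts [absurd h' hne, absurd h' hne']
  · exact (dist_point_swap_sq_lt hq hq' hq12 hp hp' hp12 h).ne'

theorem shift_sub_shift_ne (hK : m ≤ K) (hp : p ∈ grid m K) (hq : q ∈ grid m K)
    (hp' : p' ∈ grid m K) (hq' : q' ∈ grid m K) (hwp : window K p = window K p')
    (hwq : window K q = window K q') (hpq : window K p ≠ window K q)
    (hne : (p', q') ≠ (p, q)) : shift m p - shift m q ≠ shift m p' - shift m q' := by
  intro h
  rcases eq_or_eq_swap_of_window_eq hK hp hp' hwp with rfl | ⟨hp12, rfl⟩ <;>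
    rcases eq_or_eq_swap_of_window_eq hK hq hq' hwq with rfl | ⟨hq12, rfl⟩
  · exact hne rfl
  · have h1 := abs_shift_sub_shift_swap (mem_grid.1 hq).1 (mem_grid.1 hq').1 hq12
    rw [show shift m q - shift m q.swap = 0 by linarith, abs_zero] at h1
    linarith [sq_lt_pairWeight (mem_grid.1 hq).1 (mem_grid.1 hq').1, sq_nonneg (m : ℤ)]
  · have h1 := abs_shift_sub_shift_swap (mem_grid.1 hp).1 (mem_grid.1 hp').1 hp12
    rw [show shift m p - shift m p.swap = 0 by linarith, abs_zero] at h1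
    linarith [sq_lt_pairWeight (mem_grid.1 hp).1 (mem_grid.1 hp').1, sq_nonneg (m : ℤ)]
  · have h1 := abs_shift_sub_shift_swap (mem_grid.1 hp).1 (mem_grid.1 hp').1 hp12
    rw [show shift m p - shift m p.swap = shift m q - shift m q.swap by linarith,
      abs_shift_sub_shift_swap (mem_grid.1 hq).1 (mem_grid.1 hq').1 hq12, pairWeight,
      pairWeight, sub_right_inj, Nat.cast_inj] at h1
    exact hpq (window_eq_of_pairCode_eq (mem_grid.1 hp).1 (mem_grid.1 hp').1 (mem_grid.1 hq).1
      (mem_grid.1 hq').1 h1.symm)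

theorem dist_point_sq_ne_of_window_eq (hK : m ≤ K) (hp : p ∈ grid m K) (hq : q ∈ grid m K)
    (hp' : p' ∈ grid m K) (hq' : q' ∈ grid m K) (hwp : window K p = window K p')
    (hwq : window K q = window K q') (hpq : window K p ≠ window K q)
    (hne : (p', q') ≠ (p, q)) :
    dist (point m K p) (point m K q) ^ 2 ≠ dist (point m K p') (point m K q') ^ 2 := by
  have hm := one_le_of_mem_grid hp
  have hgap : (1 : ℝ) ≤ |(3 : ℝ) ^ window K p - 3 ^ window K q| := by
    have := Int.one_le_abs (abs_ne_zero.1 (mt abs_three_pow_sub_eq_zero_iff.1 hpq))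
    exact_mod_cast this
  have hshift : (1 : ℝ) ≤ |((shift m p : ℝ) - shift m q) - (shift m p' - shift m q')| := by
    have := Int.one_le_abs (sub_ne_zero.2 (shift_sub_shift_ne hK hp hq hp' hq' hwp hwq hpq hne))
    exact_mod_cast this
  rw [dist_point_sq, dist_point_sq, ← hwp, ← hwq]
  exact sq_add_sq_ne_of_one_le_abs_sub (T := 8 * m ^ 2) (A := 2 * m ^ 2)
    (by rw [abs_mul, abs_of_nonneg (by positivity : (0 : ℝ) ≤ 8 * m ^ 2)]; nlinarith)
    (abs_shift_sub_le (mem_grid.1 hp).1 (mem_grid.1 hq).1)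
    (abs_shift_sub_le (mem_grid.1 hp').1 (mem_grid.1 hq').1) hshift (sq_xCoord_sub_le hp hq)
    (sq_xCoord_sub_le hp' hq') (by nlinarith)

theorem dist_point_ne (hK : m ≤ K) (hp : p ∈ grid m K) (hq : q ∈ grid m K)
    (hp' : p' ∈ grid m K) (hq' : q' ∈ grid m K) (hpq : p ≠ q) (hpq' : p' ≠ q')
    (hne : (p', q') ≠ (p, q)) (hne' : (p', q') ≠ (q, p)) :
    dist (point m K p) (point m K q) ≠ dist (point m K p') (point m K q') := by
  intro h
  replace h := congrArg (· ^ 2) h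
  rcases lt_trichotomy |(3 : ℤ) ^ window K p - 3 ^ window K q|
    |(3 : ℤ) ^ window K p' - 3 ^ window K q'| with hlt | heq | hgt
  · exact (dist_point_sq_lt_of_abs_pow_sub_lt hp hq hp' hq' hlt).ne h
  · by_cases hw : window K p = window K q
    · have hw' : window K p' = window K q' :=
        abs_three_pow_sub_eq_zero_iff.1 (heq ▸ abs_three_pow_sub_eq_zero_iff.2 hw)
      rcases eq_or_eq_swap_of_window_eq hK hp hq hw with rfl | ⟨hp12, rfl⟩
      · exact hpq rfl
      rcases eq_or_eq_swap_of_window_eq hK hp' hq' hw' with rfl | ⟨hp12', rfl⟩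
      · exact hpq' rfl
      refine dist_point_swap_sq_ne hK hp hq hp12 hp' hq' hp12' ?_ ?_ h
      · rintro rfl
        exact hne rfl
      · rintro rfl
        exact hne' rfl
    · rcases eq_or_eq_of_abs_three_pow_sub_eq hw heq with ⟨h1, h2⟩ | ⟨h1, h2⟩
      · exact dist_point_sq_ne_of_window_eq hK hp hq hp' hq' h1 h2 hw hne h
      · rw [dist_comm (point m K p')] at h
        refine dist_point_sq_ne_of_window_eq hK hp hq hq' hp' h1 h2 hw ?_ h
        intro h'
        simp only [Prod.mk.injEq] at h'
        exact hne' (by rw [h'.1, h'.2])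
  · exact (dist_point_sq_lt_of_abs_pow_sub_lt hp' hq' hp hq hgt).ne' h

theorem dist_point_le_of_mem (hK : m ≤ K) {a b : ℕ} (hab : a < b) (hb : b < m)
    (hr : r ∈ grid m K) (hr' : r' ∈ grid m K) (hrr' : r ≠ r') (ha : a ≤ r.1)
    (hb1 : r.1 ≤ b) (ha' : a ≤ r'.1) (hb1' : r'.1 ≤ b) :
    dist (point m K (a, b)) (point m K (b, a)) ≤ dist (point m K r) (point m K r') := by
  have hab_mem : (a, b) ∈ grid m K := mem_grid.2 ⟨by omega, by omega⟩
  have hba_mem : (b, a) ∈ grid m K := mem_grid.2 ⟨by omega, by omega⟩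
  rw [← sq_le_sq₀ dist_nonneg dist_nonneg]
  by_cases hw : window K r = window K r'
  · rcases eq_or_eq_swap_of_window_eq hK hr hr' hw with rfl | ⟨hr12, rfl⟩
    · exact absurd rfl hrr'
    rcases pairCode_lt_or_eq (m := m) hb ha hb1 ha' hb1' with hlt | rfl | rfl
    · exact (dist_point_swap_sq_lt hab_mem hba_mem hab.ne hr hr' hr12 hlt).le
    · exact le_rfl
    · rw [dist_comm]
      exact le_rfl
  · refine (dist_point_sq_lt_of_abs_pow_sub_lt hab_mem hba_mem hr hr' ?_).le
    rw [show window K (b, a) = window K (a, b) from window_swap K (a, b), sub_self, abs_zero]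
    exact (abs_nonneg _).lt_of_ne (Ne.symm (mt abs_three_pow_sub_eq_zero_iff.1 hw))

theorem injOn_point : Set.InjOn (point m K) (grid m K) := fun _ hp _ hq h =>
  eq_of_xCoord_eq (mem_grid.1 hp).2 (mem_grid.1 hq).2 (congrArg (· 0) h)

theorem card_pointSet : (pointSet m K).card = m * K := by
  rw [pointSet, card_image_of_injOn injOn_point, grid, card_product, card_range, card_range]

theorem pointSet_apply_zero_ne :
    ∀ x ∈ pointSet m K, ∀ y ∈ pointSet m K, x ≠ y → x 0 ≠ y 0 := by
  simp only [pointSet, forall_mem_image]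
  intro p hp q hq hpq h
  exact hpq (congrArg _ (eq_of_xCoord_eq (mem_grid.1 hp).2 (mem_grid.1 hq).2 h))

theorem pointSet_dist_ne (hK : m ≤ K) :
    ∀ x ∈ pointSet m K, ∀ y ∈ pointSet m K, ∀ x' ∈ pointSet m K,
      ∀ y' ∈ pointSet m K, x ≠ y → x' ≠ y' → ({x, y} : Set E) ≠ {x', y'} →
        dist x y ≠ dist x' y' := by
  simp only [pointSet, forall_mem_image]
  intro p hp q hq p' hp' q' hq' hpq hpq' hne
  refine dist_point_ne hK hp hq hp' hq' (ne_of_apply_ne _ hpq) (ne_of_apply_ne _ hpq') ?_ ?_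
  · intro h
    simp only [Prod.mk.injEq] at h
    exact hne (by rw [h.1, h.2])
  · intro h
    simp only [Prod.mk.injEq] at h
    exact hne (by rw [h.1, h.2, Set.pair_comm])

theorem natCard_pointSet_inter_slab (hi : 1 ≤ i) (him : i ≤ m) :
    Nat.card {x : E | x ∈ pointSet m K ∧ (i : ℝ) < x 0 ∧ x 0 < i + 1} = K := by
  have hset : {x : E | x ∈ pointSet m K ∧ (i : ℝ) < x 0 ∧ x 0 < i + 1} =
      ((({i - 1} ×ˢ range K).image (point m K) : Finset E) : Set E) := by
    ext x
    simp only [Set.mem_ofPred_eq, pointSet, coe_image, Set.mem_image, mem_coe, mem_image,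
      mem_product, mem_singleton, mem_range]
    constructor
    · rintro ⟨⟨p, hp, rfl⟩, hx⟩
      rw [point_apply_zero, natCast_lt_xCoord_and_xCoord_lt_iff (mem_grid.1 hp).2] at hx
      exact ⟨p, ⟨by omega, (mem_grid.1 hp).2⟩, rfl⟩
    · rintro ⟨p, ⟨hp1, hp2⟩, rfl⟩
      refine ⟨⟨p, mem_grid.2 ⟨by omega, hp2⟩, rfl⟩, ?_⟩
      rw [point_apply_zero, natCast_lt_xCoord_and_xCoord_lt_iff hp2]
      omega
  rw [hset, Nat.card_coe_set_eq, Set.ncard_coe_finset, card_image_of_injOn, card_product,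
    card_singleton, card_range, one_mul]
  refine injOn_point.mono fun p hp => ?_
  simp only [coe_product, coe_singleton, coe_range, Set.mem_prod, Set.mem_singleton_iff,
    Set.mem_Iio] at hp
  exact mem_grid.2 ⟨by omega, hp.2⟩

theorem exists_isClosestPair_slab (hK : 2 ≤ K) (hi : 1 ≤ i) (hij : i < j) (hj : j ≤ m + 1) :
    ∃ x y, IsClosestPair (pointSet m K) (slab i j) x y := by
  have h0 : (i - 1, 0) ∈ grid m K := mem_grid.2 ⟨by omega, by omega⟩
  have h1 : (i - 1, 1) ∈ grid m K := mem_grid.2 ⟨by omega, by omega⟩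
  exact exists_isClosestPair (mem_image_of_mem _ h0) (mem_image_of_mem _ h1)
    (fun h => absurd (injOn_point h0 h1 h) (by simp))
    ((point_mem_slab_iff (by omega)).2 ⟨by omega, by omega⟩)
    ((point_mem_slab_iff (by omega)).2 ⟨by omega, by omega⟩)

theorem isClosestPair_point_point (hK : m ≤ K) {a b : ℕ} (hab : a < b) (hb : b < m) :
    IsClosestPair (pointSet m K) (slab (a + 1) (b + 2)) (point m K (a, b)) (point m K (b, a)) := by
  have hab_mem : (a, b) ∈ grid m K := mem_grid.2 ⟨by omega, by omega⟩
  have hba_mem : (b, a) ∈ grid m K := mem_grid.2 ⟨by omega, by omega⟩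
  refine ⟨mem_image_of_mem _ hab_mem, mem_image_of_mem _ hba_mem,
    fun h => absurd (injOn_point hab_mem hba_mem h) (by simp [hab.ne]),
    (point_mem_slab_iff (by omega)).2 ⟨by omega, by omega⟩,
    (point_mem_slab_iff (by omega)).2 ⟨by omega, by omega⟩, ?_⟩
  simp only [pointSet, forall_mem_image]
  intro r hr t ht hrt hrU htU
  rw [point_mem_slab_iff (mem_grid.1 hr).2] at hrU
  rw [point_mem_slab_iff (mem_grid.1 ht).2] at htU
  exact dist_point_le_of_mem hK hab hb hr ht (ne_of_apply_ne _ hrt) (by omega) (by omega)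
    (by omega) (by omega)

theorem image_floor_of_isClosestPair (hK : m ≤ K) (hi : 1 ≤ i) (hij : i < j) (hj : j ≤ m + 1)
    (h : IsClosestPair (pointSet m K) (slab i j) x y) :
    (fun z : E => ⌊z 0⌋₊) '' {x, y} = {i, j - 1} := by
  rcases Nat.lt_or_ge (i + 1) j with hij' | hij'
  · obtain ⟨a, rfl⟩ : ∃ a, i = a + 1 := ⟨i - 1, by omega⟩
    obtain ⟨b, rfl⟩ : ∃ b, j = b + 2 := ⟨j - 2, by omega⟩
    rw [h.pair_eq (pointSet_dist_ne hK) (isClosestPair_point_point hK (by omega) (by omega)),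
      Set.image_pair, point_apply_zero, point_apply_zero, floor_xCoord (by omega),
      floor_xCoord (by omega)]
    rfl
  · have hfloor : ∀ z ∈ pointSet m K, z ∈ slab i j → ⌊z 0⌋₊ = i := by
      simp only [pointSet, forall_mem_image]
      intro p hp hpU
      rw [point_mem_slab_iff (mem_grid.1 hp).2] at hpU
      rw [point_apply_zero, floor_xCoord (mem_grid.1 hp).2]
      omega
    obtain ⟨hx, hy, -, hxU, hyU, -⟩ := h
    rw [Set.image_pair, hfloor x hx hxU, hfloor y hy hyU, show j - 1 = i by omega,
      Set.pair_eq_singleton]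

end SlabConstruction

end

open SlabConstruction in
theorem stmt_19 (n m : ℕ) (hm : 0 < m) (hdvd : m ∣ n) (hnm : m * (m + 1) ≤ n) :
    ∃ S : Finset (EuclideanSpace ℝ (Fin 2)),
      S.card = n ∧
      (∀ p ∈ S, ∀ q ∈ S, p ≠ q → p 0 ≠ q 0) ∧
      (∀ p ∈ S, ∀ q ∈ S, ∀ p' ∈ S, ∀ q' ∈ S, p ≠ q → p' ≠ q' →
        ({p, q} : Set (EuclideanSpace ℝ (Fin 2))) ≠ {p', q'} → dist p q ≠ dist p' q') ∧
      (∀ i : ℕ, 1 ≤ i → i ≤ m →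
        Nat.card {p : EuclideanSpace ℝ (Fin 2) |
          p ∈ S ∧ (i : ℝ) < p 0 ∧ p 0 < (i : ℝ) + 1} = n / m) ∧
      ∃ P : ℕ → ℕ → Set (EuclideanSpace ℝ (Fin 2)),
        (∀ i j : ℕ, 1 ≤ i → i < j → j ≤ m + 1 →
          ∃ p ∈ S, ∃ q ∈ S, p ≠ q ∧ P i j = {p, q} ∧
            (i : ℝ) ≤ p 0 ∧ p 0 ≤ (j : ℝ) ∧ (i : ℝ) ≤ q 0 ∧ q 0 ≤ (j : ℝ) ∧
            ∀ r ∈ S, ∀ t ∈ S, r ≠ t →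
              (i : ℝ) ≤ r 0 → r 0 ≤ (j : ℝ) → (i : ℝ) ≤ t 0 → t 0 ≤ (j : ℝ) →
              dist p q ≤ dist r t) ∧
        (∀ i j i' j' : ℕ, 1 ≤ i → i < j → j ≤ m + 1 → 1 ≤ i' → i' < j' → j' ≤ m + 1 →
          (i, j) ≠ (i', j') → P i j ≠ P i' j') := by
  obtain ⟨K, rfl⟩ := hdvd
  have hK : m + 1 ≤ K := Nat.le_of_mul_le_mul_left hnm hm
  have hP : ∀ i j, ∃ P : Set (EuclideanSpace ℝ (Fin 2)), 1 ≤ i → i < j → j ≤ m + 1 →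
      ∃ x y, IsClosestPair (pointSet m K) (slab i j) x y ∧ P = {x, y} := by
    intro i j
    by_cases h : 1 ≤ i ∧ i < j ∧ j ≤ m + 1
    · obtain ⟨x, y, hxy⟩ := exists_isClosestPair_slab (m := m) (K := K) (by omega) h.1 h.2.1 h.2.2
      exact ⟨{x, y}, fun _ _ _ => ⟨x, y, hxy, rfl⟩⟩
    · exact ⟨∅, fun h1 h2 h3 => absurd ⟨h1, h2, h3⟩ h⟩
  choose P hP using hP
  refine ⟨pointSet m K, card_pointSet, pointSet_apply_zero_ne, pointSet_dist_ne (by omega),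
    fun i hi him => by rw [Nat.mul_div_cancel_left K hm]; exact natCard_pointSet_inter_slab hi him,
    P, fun i j hi hij hj => ?_, fun i j i' j' hi hij hj hi' hij' hj' hne hPP => ?_⟩
  · obtain ⟨x, y, ⟨hx, hy, hxy, ⟨hx1, hx2⟩, ⟨hy1, hy2⟩, hmin⟩, hPxy⟩ := hP i j hi hij hj
    exact ⟨x, hx, y, hy, hxy, hPxy, hx1, hx2, hy1, hy2,
      fun r hr t ht hrt h1 h2 h3 h4 => hmin r hr t ht hrt ⟨h1, h2⟩ ⟨h3, h4⟩⟩
  · obtain ⟨x, y, hxy, hPxy⟩ := hP i j hi hij hj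
    obtain ⟨x', y', hxy', hPxy'⟩ := hP i' j' hi' hij' hj'
    have h := image_floor_of_isClosestPair (by omega) hi hij hj hxy
    rw [← hPxy, hPP, hPxy', image_floor_of_isClosestPair (by omega) hi' hij' hj' hxy'] at h
    rcases Set.pair_eq_pair_iff.1 h with ⟨h1, h2⟩ | ⟨h1, h2⟩ <;>
      exact hne (Prod.ext (by omega) (by omega))
end
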